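/- arXiv:0910.4723 — 3 statements merged into one kernel-verified Lean document; each statement's English description precedes it below -/
import Mathlib

section
/- Define D(δ,k) = δ(1-k²)/(1+k√(1-δ))² for δ ∈ [0,1], k ∈ (-1,1), and define D⁻¹(δ,k) := D(δ, -min(k, √(1-δ))). Then for k ∈ [0,1) and δ ∈ [0,1]: D⁻¹(D(δ,k), k) = δ and D(D⁻¹(δ,k), k) = min(δ, 1-k²). -/
noncomputable def Dcomp (δ k : ℝ) : ℝ :=
  δ * (1 - k ^ 2) / (1 + k * Real.sqrt (1 - δ)) ^ 2

noncomputable def DcompInv (δ k : ℝ) : ℝ :=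
  Dcomp δ (-(min k (Real.sqrt (1 - δ))))

/-!
With `s = √(1 - δ)` one has `1 - D(δ, k) = ((k + s) / (1 + k s))²`, so `√(1 - D(·, k))` acts on `s`
as relativistic velocity addition of `k`. Compressing by `k` and then by `-k` therefore returns
`s`, hence `δ`. When `k > s` the inverse instead uses `-s`, which sends `δ` to `1`, and `D(1, k) = 1 - k²`.
-/

open Real

lemma one_sub_Dcomp {δ k : ℝ} (hδ : δ ≤ 1) (hden : 1 + k * √(1 - δ) ≠ 0) :
    1 - Dcomp δ k = ((k + √(1 - δ)) / (1 + k * √(1 - δ))) ^ 2 := by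
  have hs : √(1 - δ) ^ 2 = 1 - δ := sq_sqrt (by linarith)
  rw [Dcomp]
  field_simp
  linear_combination (k ^ 2 - 1) * hs

lemma sqrt_one_sub_Dcomp {δ k : ℝ} (hδ : δ ≤ 1) (hnum : 0 ≤ k + √(1 - δ))
    (hden : 0 < 1 + k * √(1 - δ)) :
    √(1 - Dcomp δ k) = (k + √(1 - δ)) / (1 + k * √(1 - δ)) := by
  rw [one_sub_Dcomp hδ hden.ne', sqrt_sq (div_nonneg hnum hden.le)]

lemma Dcomp_Dcomp_neg {δ k : ℝ} (hδ : δ ≤ 1) (hk : k ^ 2 < 1) (hnum : 0 ≤ k + √(1 - δ))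
    (hden : 0 < 1 + k * √(1 - δ)) :
    Dcomp (Dcomp δ k) (-k) = δ := by
  set s := √(1 - δ)
  have hs : s ^ 2 = 1 - δ := sq_sqrt (by linarith)
  have hDle : Dcomp δ k ≤ 1 := by
    have := one_sub_Dcomp hδ hden.ne'
    nlinarith [sq_nonneg ((k + s) / (1 + k * s))]
  have hden' : 1 + -k * ((k + s) / (1 + k * s)) = (1 - k ^ 2) / (1 + k * s) := by
    field_simp
    ring
  have hden'_ne : 1 + -k * √(1 - Dcomp δ k) ≠ 0 := by
    rw [sqrt_one_sub_Dcomp hδ hnum hden, hden']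
    exact div_ne_zero (by linarith) hden.ne'
  have h := one_sub_Dcomp hDle hden'_ne
  rw [sqrt_one_sub_Dcomp hδ hnum hden, hden',
    show -k + (k + s) / (1 + k * s) = s * (1 - k ^ 2) / (1 + k * s) by field_simp; ring,
    div_div_div_cancel_right₀ hden.ne', mul_div_cancel_right₀ _ (by linarith), hs] at h
  linarith

lemma Dcomp_neg_sqrt {δ : ℝ} (hδ₀ : 0 < δ) (hδ₁ : δ ≤ 1) : Dcomp δ (-√(1 - δ)) = 1 := by
  have hs : √(1 - δ) ^ 2 = 1 - δ := sq_sqrt (by linarith)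
  rw [Dcomp, neg_sq, hs, neg_mul, ← sq, hs, sub_sub_cancel, ← sub_eq_add_neg, sub_sub_cancel]
  field_simp

lemma Dcomp_one (k : ℝ) : Dcomp 1 k = 1 - k ^ 2 := by
  simp [Dcomp]

theorem compression_inverse (k δ : ℝ) (hk : k ∈ Set.Ico (0:ℝ) 1)
    (hδ : δ ∈ Set.Icc (0:ℝ) 1) :
    DcompInv (Dcomp δ k) k = δ ∧
    Dcomp (DcompInv δ k) k = min δ (1 - k ^ 2) := by
  obtain ⟨hk₀, hk₁⟩ := hk
  obtain ⟨hδ₀, hδ₁⟩ := hδ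
  set s := √(1 - δ) with hs_def
  have hs : s ^ 2 = 1 - δ := sq_sqrt (by linarith)
  have hs₀ : 0 ≤ s := sqrt_nonneg _
  have hs₁ : s ≤ 1 := sqrt_le_one.mpr (by linarith)
  have hk2 : k ^ 2 < 1 := by nlinarith
  have hden : 0 < 1 + k * s := by positivity
  constructor
  · have hmin : min k √(1 - Dcomp δ k) = k := by
      rw [min_eq_left_iff, sqrt_one_sub_Dcomp hδ₁ (by positivity) hden, le_div_iff₀ hden]
      nlinarith
    rw [DcompInv, hmin, Dcomp_Dcomp_neg hδ₁ hk2 (by positivity) hden]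
  · rcases le_or_gt k s with hks | hsk
    · have h := Dcomp_Dcomp_neg (k := -k) hδ₁ (by simpa using hk2) (by linarith) (by nlinarith)
      rw [neg_neg] at h
      rw [DcompInv, ← hs_def, min_eq_left hks, h, min_eq_left (by nlinarith)]
    · rw [DcompInv, ← hs_def, min_eq_right hsk.le, Dcomp_neg_sqrt (by nlinarith) hδ₁, Dcomp_one,
        min_eq_right (by nlinarith)]
end

section
/- Fix K > 1 and k = (K−1)/(K+1). For α in [1/K, 1−k²] define F(α) = sup{ D(δ,k) : δ ∈ [0,1], α·δ ≥ D(δ,k) } where D(δ,k) = δ(1−k²)/(1+k√(1−δ))². Then F(α) = −(4K/(K−1)²)(√α − √K)(√α − 1/√K). -/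
open Set Real

/-- The value of `√(1 - δ)` at which the constraint `Dcomp δ k ≤ α δ` is tight. -/
noncomputable def sqrtThreshold (k α : ℝ) : ℝ := (√((1 - k ^ 2) / α) - 1) / k

noncomputable def criticalDelta (k α : ℝ) : ℝ := 1 - sqrtThreshold k α ^ 2

section Threshold

variable {k α δ : ℝ}

theorem one_add_mul_sqrtThreshold (hk : k ≠ 0) :
    1 + k * sqrtThreshold k α = √((1 - k ^ 2) / α) := by
  rw [sqrtThreshold]
  field_simp
  ring

theorem sqrtThreshold_nonneg (hk : 0 < k) (hα : 0 < α) (hαk : α ≤ 1 - k ^ 2) :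
    0 ≤ sqrtThreshold k α := by
  have : 1 ≤ √((1 - k ^ 2) / α) := by
    rw [le_sqrt' one_pos, one_pow, le_div_iff₀ hα]
    linarith
  exact div_nonneg (by linarith) hk.le

theorem sqrtThreshold_le_one (hk : 0 < k) (hα : 0 < α) (hαk : (1 - k) / (1 + k) ≤ α) :
    sqrtThreshold k α ≤ 1 := by
  have hk1 : 0 < 1 + k := by linarith
  have hα' : 1 - k ^ 2 ≤ α * (1 + k) ^ 2 := by
    rw [div_le_iff₀ hk1] at hαk
    nlinarith
  have : √((1 - k ^ 2) / α) ≤ 1 + k := by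
    rwa [sqrt_le_left hk1.le, div_le_iff₀' hα]
  rw [sqrtThreshold, div_le_one hk]
  linarith

theorem Dcomp_le_mul_iff (hk : 0 ≤ k) (hδ : 0 < δ) :
    Dcomp δ k ≤ α * δ ↔ 1 - k ^ 2 ≤ α * (1 + k * √(1 - δ)) ^ 2 := by
  have hden : 0 < (1 + k * √(1 - δ)) ^ 2 := by positivity
  rw [Dcomp, div_le_iff₀ hden, mul_assoc, mul_comm α, mul_assoc, mul_le_mul_iff_right₀ hδ,
    mul_comm]

theorem Dcomp_le_mul_iff_le_criticalDelta (hk : 0 < k) (hα : 0 < α) (hαk : α ≤ 1 - k ^ 2)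
    (hδ : δ ∈ Ioc 0 1) : Dcomp δ k ≤ α * δ ↔ δ ≤ criticalDelta k α := by
  have hs := sqrtThreshold_nonneg hk hα hαk
  rw [Dcomp_le_mul_iff hk.le hδ.1, ← div_le_iff₀' hα, ← sqrt_le_left (by positivity),
    ← one_add_mul_sqrtThreshold hk.ne', add_le_add_iff_left, mul_le_mul_iff_right₀ hk,
    le_sqrt hs (by linarith [hδ.2]), criticalDelta, le_sub_comm]

theorem Dcomp_criticalDelta (hk : 0 < k) (hα : 0 < α) (hαk : α ≤ 1 - k ^ 2) :
    Dcomp (criticalDelta k α) k = α * criticalDelta k α := by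
  have hsqrt : √(1 - criticalDelta k α) = sqrtThreshold k α := by
    rw [criticalDelta, sub_sub_cancel, sqrt_sq (sqrtThreshold_nonneg hk hα hαk)]
  have hk2 : 0 < 1 - k ^ 2 := hα.trans_le hαk
  rw [Dcomp, hsqrt, one_add_mul_sqrtThreshold hk.ne', sq_sqrt (by positivity)]
  field_simp

theorem sSup_admissible_Dcomp_eq (hk : 0 < k) (hk1 : k < 1)
    (hα : α ∈ Icc ((1 - k) / (1 + k)) (1 - k ^ 2)) :
    sSup {x : ℝ | ∃ δ ∈ Icc (0 : ℝ) 1, x = Dcomp δ k ∧ Dcomp δ k ≤ α * δ} =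
      α * criticalDelta k α := by
  have hα0 : 0 < α := lt_of_lt_of_le (div_pos (by linarith) (by linarith)) hα.1
  have hcrit0 : 0 ≤ criticalDelta k α :=
    sub_nonneg.2 <|
      pow_le_one₀ (sqrtThreshold_nonneg hk hα0 hα.2) (sqrtThreshold_le_one hk hα0 hα.1)
  refine IsGreatest.csSup_eq ⟨⟨criticalDelta k α, ⟨hcrit0, ?_⟩, ?_⟩, ?_⟩
  · exact sub_le_self _ (sq_nonneg _)
  · have := Dcomp_criticalDelta hk hα0 hα.2
    exact ⟨this.symm, this.le⟩
  · rintro x ⟨δ, ⟨hδ0, hδ1⟩, rfl, hle⟩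
    have hδcrit : δ ≤ criticalDelta k α := by
      rcases hδ0.eq_or_lt with rfl | hδpos
      · exact hcrit0
      · exact (Dcomp_le_mul_iff_le_criticalDelta hk hα0 hα.2 ⟨hδpos, hδ1⟩).mp hle
    exact hle.trans (mul_le_mul_of_nonneg_left hδcrit hα0.le)

end Threshold

theorem one_sub_div_one_add_eq_one_div {K : ℝ} (hK : K + 1 ≠ 0) :
    (1 - (K - 1) / (K + 1)) / (1 + (K - 1) / (K + 1)) = 1 / K := by
  rw [one_sub_div hK, one_add_div hK, div_div_div_cancel_right₀ hK]
  ring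

theorem mul_criticalDelta_eq {K α : ℝ} (hK : 1 < K) (hα : 0 < α) :
    α * criticalDelta ((K - 1) / (K + 1)) α =
      -(4 * K / (K - 1) ^ 2) * (√α - √K) * (√α - 1 / √K) := by
  obtain ⟨a, ha, rfl⟩ : ∃ a, 0 < a ∧ α = a ^ 2 :=
    ⟨√α, sqrt_pos.2 hα, (sq_sqrt hα.le).symm⟩
  obtain ⟨b, hb, rfl⟩ : ∃ b, 1 < b ∧ K = b ^ 2 :=
    ⟨√K, by simpa using sqrt_lt_sqrt zero_le_one hK, (sq_sqrt (by linarith)).symm⟩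
  have hb2 : b ^ 2 - 1 ≠ 0 := by nlinarith
  have hk2 : 1 - ((b ^ 2 - 1) / (b ^ 2 + 1)) ^ 2 = (2 * b / (b ^ 2 + 1)) ^ 2 := by
    field_simp
    ring
  rw [criticalDelta, sqrtThreshold, hk2, ← div_pow, sqrt_sq (by positivity), sqrt_sq ha.le,
    sqrt_sq (by linarith)]
  field_simp
  ring

theorem box_spectrum_bound (K : ℝ) (hK : 1 < K) (α : ℝ)
    (hα : α ∈ Set.Icc (1 / K) (1 - ((K - 1) / (K + 1)) ^ 2)) :
    sSup {x : ℝ | ∃ δ ∈ Set.Icc (0:ℝ) 1,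
        x = Dcomp δ ((K - 1) / (K + 1)) ∧ Dcomp δ ((K - 1) / (K + 1)) ≤ α * δ} =
      -(4 * K / (K - 1) ^ 2) * (Real.sqrt α - Real.sqrt K) *
        (Real.sqrt α - 1 / Real.sqrt K) := by
  have hk : 0 < (K - 1) / (K + 1) := div_pos (by linarith) (by linarith)
  have hk1 : (K - 1) / (K + 1) < 1 := (div_lt_one (by linarith)).2 (by linarith)
  have hα0 : 0 < α := lt_of_lt_of_le (by positivity) hα.1
  rw [← one_sub_div_one_add_eq_one_div (by linarith)] at hα
  rw [sSup_admissible_Dcomp_eq hk hk1 hα, mul_criticalDelta_eq hK hα0]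
end

section
/- Let k ∈ (0,1) and Δ* = D(δ, −min(k,√(1−δ))) with D(δ,k) = δ(1−k²)/(1+k√(1−δ))², for δ ∈ [0, 1−k²]. Then (1+k²)·Δ*/(1−k²+k²·Δ*) = (1+k²)·δ/(1+k²−2k√(1−δ)). -/
/-! Since `δ ≤ 1 - k²` forces `k ≤ √(1 - δ)`, the minimum is `k`. Writing `s = √(1 - δ)`, so that
`δ = 1 - s²`, the denominator collapses through `(1 - k s)² + k² (1 - s²) = 1 + k² - 2 k s`, and the
common factor `(1 - k²) / (1 - k s)²` cancels. -/

lemma min_sqrt_one_sub_eq_left {k δ : ℝ} (hδ : δ ≤ 1 - k ^ 2) :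
    min k (Real.sqrt (1 - δ)) = k :=
  min_eq_left (Real.le_sqrt_of_sq_le (by linarith))

lemma one_sub_mul_sqrt_one_sub_pos {k δ : ℝ} (hk₀ : 0 ≤ k) (hk₁ : k < 1) (hδ : 0 ≤ δ) :
    0 < 1 - k * Real.sqrt (1 - δ) := by
  have hs : Real.sqrt (1 - δ) ≤ 1 := Real.sqrt_le_one.mpr (by linarith)
  have : k * Real.sqrt (1 - δ) < 1 := (mul_le_of_le_one_right hk₀ hs).trans_lt hk₁
  linarith

lemma one_sub_sq_add_sq_mul_Dcomp_neg {k δ : ℝ} (hδ : δ ≤ 1)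
    (hks : 1 - k * Real.sqrt (1 - δ) ≠ 0) :
    1 - k ^ 2 + k ^ 2 * Dcomp δ (-k) =
      (1 - k ^ 2) * (1 + k ^ 2 - 2 * k * Real.sqrt (1 - δ)) /
        (1 - k * Real.sqrt (1 - δ)) ^ 2 := by
  have hs : Real.sqrt (1 - δ) ^ 2 = 1 - δ := Real.sq_sqrt (by linarith)
  unfold Dcomp
  rw [neg_mul, ← sub_eq_add_neg, neg_sq, eq_div_iff (pow_ne_zero 2 hks)]
  field_simp
  linear_combination (1 - k ^ 2) * k ^ 2 * hs

theorem expansion_composition (k δ : ℝ) (hk : k ∈ Set.Ioo (0:ℝ) 1)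
    (hδ : δ ∈ Set.Icc (0:ℝ) (1 - k ^ 2)) :
    (1 + k ^ 2) * Dcomp δ (-(min k (Real.sqrt (1 - δ)))) /
        (1 - k ^ 2 + k ^ 2 * Dcomp δ (-(min k (Real.sqrt (1 - δ))))) =
      (1 + k ^ 2) * δ / (1 + k ^ 2 - 2 * k * Real.sqrt (1 - δ)) := by
  obtain ⟨hk₀, hk₁⟩ := hk
  obtain ⟨hδ₀, hδ₁⟩ := hδ
  have hδ_le_one : δ ≤ 1 := by nlinarith
  have hks := (one_sub_mul_sqrt_one_sub_pos hk₀.le hk₁ hδ₀).ne'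
  have hk_sq : 1 - k ^ 2 ≠ 0 := by nlinarith
  rw [min_sqrt_one_sub_eq_left hδ₁, one_sub_sq_add_sq_mul_Dcomp_neg hδ_le_one hks]
  unfold Dcomp
  rw [neg_mul, ← sub_eq_add_neg, neg_sq]
  field_simp
end
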